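/- arXiv:2408.17274 — 2 statements merged into one kernel-verified Lean document; each statement's English description precedes it below -/
import Mathlib

section
/- Let X: [0,1] → ℝ be A_s-Lipschitz, let u_1 ≤ … ≤ u_N be the order statistics (increasing rearrangement) of N i.i.d. Uniform[0,1] random variables, and let X̄_N be the step function X̄_N(u) = Σ_{i=1}^N X(u_i)·1{u ∈ I_i}. Then E‖X̄_N − X‖_{L²[0,1]} ≤ A_s/√(6N). -/
open MeasureTheory Set ProbabilityTheory

noncomputable section

/-- The `i`-th cell of the equal-spaced partition of `[0,1]` into `m` pieces. -/
def cell (m : ℕ) (i : Fin m) : Set ℝ :=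
  if (i : ℕ) = m - 1 then Set.Icc ((m - 1 : ℝ) / m) 1
  else Set.Ico ((i : ℝ) / m) (((i : ℝ) + 1) / m)

/-- Piecewise-constant interpolation of a vector. -/
def interp (m : ℕ) (x : Fin m → ℝ) : ℝ → ℝ :=
  fun u => ∑ i, x i * (cell m i).indicator (fun _ => (1 : ℝ)) u

/-- Induced graphon (step kernel) of a matrix. -/
def interp2 (m : ℕ) (S : Fin m → Fin m → ℝ) : ℝ → ℝ → ℝ :=
  fun u v => ∑ i, ∑ j, S i j * (cell m i).indicator (fun _ => (1 : ℝ)) u *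
    (cell m j).indicator (fun _ => (1 : ℝ)) v

/-- L² norm on [0,1]. -/
def l2 (f : ℝ → ℝ) : ℝ := Real.sqrt (∫ u in Set.Icc (0 : ℝ) 1, (f u) ^ 2)

/-- L² norm on [0,1]². -/
def kl2 (W : ℝ → ℝ → ℝ) : ℝ :=
  Real.sqrt (∫ q in (Set.Icc (0 : ℝ) 1) ×ˢ (Set.Icc (0 : ℝ) 1), (W q.1 q.2) ^ 2)

/-- Graphon shift operator. -/
def shiftOp (W : ℝ → ℝ → ℝ) (X : ℝ → ℝ) : ℝ → ℝ :=
  fun v => ∫ u in Set.Icc (0 : ℝ) 1, W u v * X u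

/-- Iterated graphon shift. -/
def shiftIter (W : ℝ → ℝ → ℝ) (X : ℝ → ℝ) : ℕ → ℝ → ℝ
  | 0 => X
  | k + 1 => shiftOp W (shiftIter W X k)

/-- Graphon convolutional filter with taps `h`. -/
def gfilter {K : ℕ} (h : Fin K → ℝ) (W : ℝ → ℝ → ℝ) (X : ℝ → ℝ) : ℝ → ℝ :=
  fun v => ∑ k, h k * shiftIter W X k v

/-- Frequency response of a filter. -/
def freqResp {K : ℕ} (h : Fin K → ℝ) (lam : ℝ) : ℝ := ∑ k, h k * lam ^ (k : ℕ)

/-- Graph convolutional filter with taps `h`. -/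
def mfilter {K n : ℕ} (h : Fin K → ℝ) (S : Matrix (Fin n) (Fin n) ℝ) (x : Fin n → ℝ) :
    Fin n → ℝ :=
  ∑ k, h k • (S ^ (k : ℕ)).mulVec x

/-- `lam` is a nonzero eigenvalue of the integral operator with kernel `W` on `L²[0,1]`. -/
def IsEig (W : ℝ → ℝ → ℝ) (lam : ℝ) : Prop :=
  lam ≠ 0 ∧ ∃ φ : ℝ → ℝ, MemLp φ 2 (volume.restrict (Set.Icc (0 : ℝ) 1)) ∧
    ¬ (φ =ᵐ[volume.restrict (Set.Icc (0 : ℝ) 1)] 0) ∧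
    (∀ᵐ v ∂(volume.restrict (Set.Icc (0 : ℝ) 1)), shiftOp W φ v = lam * φ v)

/-- `Δh(λ) = min_k max_i |h(λ_i) - k|` over the eigenvalues of `W`. -/
def deltaH {K : ℕ} (h : Fin K → ℝ) (W : ℝ → ℝ → ℝ) : ℝ :=
  ⨅ k : ℝ, ⨆ lam ∈ {l : ℝ | IsEig W l}, |freqResp h lam - k|

/-- Bernoulli law with parameter `p`, as a measure on `ℝ` supported on `{0,1}`. -/
def bernoulliReal (p : ℝ) : Measure ℝ :=
  ENNReal.ofReal p • Measure.dirac 1 + ENNReal.ofReal (1 - p) • Measure.dirac 0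

/-- Graphon (WNN) neural network features, layer by layer. -/
def wnn (σ : ℝ → ℝ) (W : ℝ → ℝ → ℝ) (K : ℕ) (Fdim : ℕ → ℕ)
    (H : ℕ → ℕ → ℕ → Fin K → ℝ) (X0 : ℕ → ℝ → ℝ) : ℕ → ℕ → ℝ → ℝ
  | 0, f => X0 f
  | l + 1, f => fun u =>
      σ (∑ g ∈ Finset.range (Fdim l), gfilter (H l g f) W (wnn σ W K Fdim H X0 l g) u)

/-- Graph convolutional network features, layer by layer. -/
def gcn (σ : ℝ → ℝ) {n : ℕ} (S : Matrix (Fin n) (Fin n) ℝ) (K : ℕ) (Fdim : ℕ → ℕ)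
    (H : ℕ → ℕ → ℕ → Fin K → ℝ) (x0 : ℕ → Fin n → ℝ) : ℕ → ℕ → Fin n → ℝ
  | 0, f => x0 f
  | l + 1, f => fun i =>
      σ ((∑ g ∈ Finset.range (Fdim l), mfilter (H l g f) S (gcn σ S K Fdim H x0 l g)) i)

/-- `u ω` is the increasing rearrangement (order statistics) of `(v i ω)_i`. -/
def SortedVersion {Ω : Type*} {N : ℕ} (u : Ω → Fin N → ℝ) (v : Fin N → Ω → ℝ) : Prop :=
  ∀ ω, Monotone (u ω) ∧ ∃ σ : Equiv.Perm (Fin N), ∀ i, u ω i = v (σ i) ω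

/-- The family `v` is i.i.d. uniform on `[0,1]`. -/
def IIDUniform {Ω : Type*} [MeasurableSpace Ω] {N : ℕ} (v : Fin N → Ω → ℝ)
    (μ : Measure Ω) : Prop :=
  (∀ i, Measurable (v i)) ∧ iIndepFun v μ ∧
    ∀ i, μ.map (v i) = volume.restrict (Set.Icc (0 : ℝ) 1)

/-- Given `ω₁` (the latent features), the edge variables `e i j ω₁ : Ω₂ → ℝ` are symmetric,
conditionally independent over pairs `i ≤ j`, with `e i j ω₁ ∼ Bernoulli (W (u ω₁ i) (u ω₁ j))`. -/
def CondBernoulliAdj {Ω₁ Ω₂ : Type*} [MeasurableSpace Ω₂]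
    (μ₂ : Measure Ω₂) {N : ℕ} (e : Fin N → Fin N → Ω₁ → Ω₂ → ℝ)
    (W : ℝ → ℝ → ℝ) (u : Ω₁ → Fin N → ℝ) : Prop :=
  (∀ i j ω₁, Measurable (e i j ω₁)) ∧
  (∀ i j ω₁, e i j ω₁ = e j i ω₁) ∧
  (∀ ω₁, iIndepFun
    (fun q : {q : Fin N × Fin N // q.1 ≤ q.2} => e q.1.1 q.1.2 ω₁) μ₂) ∧
  (∀ i j ω₁, μ₂.map (e i j ω₁) = bernoulliReal (W (u ω₁ i) (u ω₁ j)))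

/-- `L₁ = ∫_{[0,t]²} W`. -/
def L1 (Wk : ℝ → ℝ → ℝ) (t : ℝ) : ℝ :=
  ∫ q in Set.Icc (0 : ℝ) t ×ˢ Set.Icc (0 : ℝ) t, Wk q.1 q.2

/-- `L₂² = ∫_{[0,t]²} W²`. -/
def L2sq (Wk : ℝ → ℝ → ℝ) (t : ℝ) : ℝ :=
  ∫ q in Set.Icc (0 : ℝ) t ×ˢ Set.Icc (0 : ℝ) t, (Wk q.1 q.2) ^ 2

/-! For fixed samples, the Lipschitz bound gives `‖X̄_N − X‖ ≤ A_s ‖ū_N − id‖`, where `ū_N` is the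
step function of the sorted samples. Integrating cell by cell, and using
`∑ᵢ (2i+1) u₍ᵢ₎ = ∑ᵢ ∑ₖ max uᵢ uₖ` for sorted samples, turns `‖ū_N − id‖²` into the symmetric
function `N⁻² ∑ᵢ ∑ₖ (uᵢ² − max uᵢ uₖ + 1/3)` of the samples. For i.i.d. uniform samples the
off-diagonal terms have mean `1/3 − 2/3 + 1/3 = 0` and the `N` diagonal ones mean
`1/3 − 1/2 + 1/3 = 1/6`, so `E ‖ū_N − id‖² = 1/(6N)`; Jensen's inequality for `√` concludes. -/

lemma l2_le_mul_l2_of_abs_le {f g : ℝ → ℝ} {c : ℝ} (hc : 0 ≤ c)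
    (hg : IntegrableOn (fun t => g t ^ 2) (Icc 0 1)) (h : ∀ t ∈ Icc (0 : ℝ) 1, |f t| ≤ c * |g t|) :
    l2 f ≤ c * l2 g := by
  have hsq : ∀ t ∈ Icc (0 : ℝ) 1, f t ^ 2 ≤ c ^ 2 * g t ^ 2 := fun t ht => by
    rw [← sq_abs (f t), ← sq_abs (g t), ← mul_pow]
    exact pow_le_pow_left₀ (abs_nonneg _) (h t ht) 2
  calc l2 f ≤ √(∫ t in Icc 0 1, c ^ 2 * g t ^ 2) := by
        refine Real.sqrt_le_sqrt (integral_mono_of_nonneg (ae_of_all _ fun t => sq_nonneg _)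
          (hg.const_mul _) (ae_restrict_of_forall_mem measurableSet_Icc hsq))
    _ = c * l2 g := by
        rw [integral_const_mul, Real.sqrt_mul (sq_nonneg c), Real.sqrt_sq hc, l2]

lemma sum_two_mul_add_one_mul_eq_sum_sum_max {N : ℕ} {w : Fin N → ℝ} (hw : Monotone w) :
    ∑ i : Fin N, (2 * (i : ℝ) + 1) * w i = ∑ i, ∑ k, max (w i) (w k) := by
  induction N with
  | zero => simp
  | succ n ih =>
    have hlast : ∀ i : Fin n, w i.castSucc ≤ w (Fin.last n) :=
      fun i => hw (Fin.le_last _)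
    have hinit := ih (w := fun i => w i.castSucc) (hw.comp Fin.strictMono_castSucc.monotone)
    simp only [Fin.sum_univ_castSucc, Fin.val_castSucc, Fin.val_last, max_eq_right (hlast _),
      max_eq_left (hlast _), max_self, Finset.sum_add_distrib, hinit, Finset.sum_const,
      Finset.card_univ, Fintype.card_fin, nsmul_eq_mul]
    ring

section StepFunction

variable {N : ℕ}

lemma cast_eq_of_eq_pred {i : Fin N} (h : (i : ℕ) = N - 1) : (i : ℝ) = N - 1 := by
  rw [h, Nat.cast_pred i.pos]

lemma cell_ae_eq_Ioc (i : Fin N) : cell N i =ᵐ[volume] Ioc ((i : ℝ) / N) ((i + 1) / N) := by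
  unfold cell
  split_ifs with h
  · have hN : (N : ℝ) ≠ 0 := by exact_mod_cast i.pos.ne'
    rw [cast_eq_of_eq_pred h, sub_add_cancel, div_self hN]
    exact Ioc_ae_eq_Icc.symm
  · exact Ico_ae_eq_Ioc

lemma measurableSet_cell (i : Fin N) : MeasurableSet (cell N i) := by
  unfold cell; split_ifs <;> measurability

lemma le_of_mem_cell {i : Fin N} {t : ℝ} (ht : t ∈ cell N i) : (i : ℝ) / N ≤ t := by
  unfold cell at ht
  split_ifs at ht with h
  · rw [cast_eq_of_eq_pred h]; exact ht.1
  · exact ht.1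

lemma lt_of_mem_cell {i : Fin N} {t : ℝ} (h : (i : ℕ) ≠ N - 1) (ht : t ∈ cell N i) :
    t < (i + 1) / N := by
  unfold cell at ht
  rw [if_neg h] at ht
  exact ht.2

lemma cell_subset_Icc (i : Fin N) : cell N i ⊆ Icc 0 1 := by
  have hN : (0 : ℝ) < N := by exact_mod_cast i.pos
  intro t ht
  refine ⟨(div_nonneg (Nat.cast_nonneg _) hN.le).trans (le_of_mem_cell ht), ?_⟩
  unfold cell at ht
  split_ifs at ht with h
  · exact ht.2
  · refine ht.2.le.trans ((div_le_one hN).2 ?_)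
    exact_mod_cast i.isLt

lemma eq_of_mem_cell {i j : Fin N} {t : ℝ} (hi : t ∈ cell N i) (hj : t ∈ cell N j) :
    i = j := by
  wlog hij : i ≤ j generalizing i j
  · exact (this hj hi (le_of_not_ge hij)).symm
  refine hij.antisymm (not_lt.1 fun hlt => ?_)
  have hN : (0 : ℝ) < N := by exact_mod_cast i.pos
  have hi' : (i : ℕ) ≠ N - 1 := by have := j.isLt; omega
  have hij' : ((i : ℝ) + 1) / N ≤ (j : ℝ) / N := by
    gcongr; exact_mod_cast Nat.succ_le_of_lt hlt
  linarith [lt_of_mem_cell hi' hi, le_of_mem_cell hj]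

lemma exists_mem_cell (hN : 0 < N) {t : ℝ} (ht : t ∈ Icc (0 : ℝ) 1) :
    ∃ i : Fin N, t ∈ cell N i := by
  have hNR : (0 : ℝ) < N := by exact_mod_cast hN
  rcases ht.2.eq_or_lt with rfl | ht1
  · refine ⟨⟨N - 1, by omega⟩, ?_⟩
    simp only [cell, if_true]
    exact ⟨(div_le_one hNR).2 (by linarith), le_rfl⟩
  set j := ⌊(N : ℝ) * t⌋₊
  have hNt : 0 ≤ (N : ℝ) * t := mul_nonneg hNR.le ht.1
  have hj : j < N := by rw [Nat.floor_lt hNt]; nlinarith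
  refine ⟨⟨j, hj⟩, ?_⟩
  have hlo : (j : ℝ) / N ≤ t := by rw [div_le_iff₀ hNR]; linarith [Nat.floor_le hNt]
  unfold cell
  split_ifs with h
  · rw [← cast_eq_of_eq_pred (i := ⟨j, hj⟩) h]; exact ⟨hlo, ht.2⟩
  · exact ⟨hlo, by rw [lt_div_iff₀ hNR]; linarith [Nat.lt_floor_add_one ((N : ℝ) * t)]⟩

lemma interp_of_mem_cell (x : Fin N → ℝ) {i : Fin N} {t : ℝ} (ht : t ∈ cell N i) :
    interp N x t = x i := by
  rw [interp, Finset.sum_eq_single i, indicator_of_mem ht, mul_one]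
  · intro j _ hji
    rw [indicator_of_notMem fun hj => hji (eq_of_mem_cell hj ht), mul_zero]
  · exact fun hi => absurd (Finset.mem_univ i) hi

lemma integral_cell_sub_sq (i : Fin N) (x : ℝ) :
    ∫ t in cell N i, (x - t) ^ 2
      = x ^ 2 / N - (2 * i + 1) * x / N ^ 2 + (((i : ℝ) + 1) ^ 3 - (i : ℝ) ^ 3) / (3 * N ^ 3) := by
  have hN : (0 : ℝ) < N := by exact_mod_cast i.pos
  have hle : (i : ℝ) / N ≤ (i + 1) / N := by gcongr; linarith
  rw [setIntegral_congr_set (cell_ae_eq_Ioc i), ← intervalIntegral.integral_of_le hle,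
    intervalIntegral.integral_comp_sub_left (fun s => s ^ 2) x, integral_pow]
  push_cast
  field_simp
  ring

lemma sq_interp_sub_eq_sum_indicator (hN : 0 < N) (x : Fin N → ℝ) {t : ℝ}
    (ht : t ∈ Icc (0 : ℝ) 1) :
    (interp N x t - t) ^ 2 = ∑ i, (cell N i).indicator (fun s => (x i - s) ^ 2) t := by
  obtain ⟨i, hi⟩ := exists_mem_cell hN ht
  rw [interp_of_mem_cell x hi, Finset.sum_eq_single i, indicator_of_mem hi]
  · exact fun j _ hji => indicator_of_notMem (fun hj => hji (eq_of_mem_cell hj hi)) _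
  · exact fun hi' => absurd (Finset.mem_univ i) hi'

lemma integrableOn_cell_indicator_sub_sq (x : ℝ) (i : Fin N) :
    IntegrableOn ((cell N i).indicator fun s => (x - s) ^ 2) (Icc 0 1) :=
  (Continuous.integrableOn_Icc (by fun_prop)).indicator (measurableSet_cell i)

lemma integrableOn_sq_interp_sub (hN : 0 < N) (x : Fin N → ℝ) :
    IntegrableOn (fun t => (interp N x t - t) ^ 2) (Icc 0 1) :=
  IntegrableOn.congr_fun
    (integrable_finsetSum _ fun i _ => integrableOn_cell_indicator_sub_sq (x i) i)
    (fun _ ht => (sq_interp_sub_eq_sum_indicator hN x ht).symm) measurableSet_Icc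

lemma sum_succ_cube_sub_cube (N : ℕ) :
    ∑ i : Fin N, (((i : ℝ) + 1) ^ 3 - (i : ℝ) ^ 3) = (N : ℝ) ^ 3 := by
  rw [Fin.sum_univ_eq_sum_range (fun k => ((k : ℝ) + 1) ^ 3 - (k : ℝ) ^ 3)]
  convert Finset.sum_range_sub (fun k => (k : ℝ) ^ 3) N using 1 <;> simp

lemma integral_sq_interp_sub (hN : 0 < N) (x : Fin N → ℝ) :
    ∫ t in Icc 0 1, (interp N x t - t) ^ 2
      = (∑ i, x i ^ 2) / N - (∑ i : Fin N, (2 * (i : ℝ) + 1) * x i) / N ^ 2 + 1 / 3 := by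
  have hN' : (N : ℝ) ≠ 0 := by exact_mod_cast hN.ne'
  have hcell : ∀ i, ∫ t in Icc 0 1, (cell N i).indicator (fun s => (x i - s) ^ 2) t
      = ∫ t in cell N i, (x i - t) ^ 2 := fun i => by
    rw [integral_indicator (measurableSet_cell i), Measure.restrict_restrict (measurableSet_cell i),
      inter_eq_self_of_subset_left (cell_subset_Icc i)]
  rw [setIntegral_congr_fun measurableSet_Icc fun t ht => sq_interp_sub_eq_sum_indicator hN x ht,
    integral_finsetSum _ fun i _ => integrableOn_cell_indicator_sub_sq (x i) i]
  simp only [hcell, integral_cell_sub_sq]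
  rw [Finset.sum_add_distrib, Finset.sum_sub_distrib, ← Finset.sum_div, ← Finset.sum_div,
    ← Finset.sum_div, sum_succ_cube_sub_cube]
  field_simp

end StepFunction

section Lipschitz

variable {As : ℝ} {X : ℝ → ℝ}
  (hX : ∀ a ∈ Icc (0 : ℝ) 1, ∀ b ∈ Icc (0 : ℝ) 1, |X a - X b| ≤ As * |a - b|)
include hX

lemma nonneg_of_abs_sub_le_mul_abs_sub : 0 ≤ As := by
  have h := hX 0 (by norm_num) 1 (by norm_num)
  norm_num at h
  exact (abs_nonneg _).trans h

lemma l2_interp_comp_sub_le {N : ℕ} (hN : 0 < N) {x : Fin N → ℝ} (hx : ∀ i, x i ∈ Icc (0 : ℝ) 1) :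
    l2 (fun t => interp N (fun i => X (x i)) t - X t) ≤ As * l2 (fun t => interp N x t - t) := by
  refine l2_le_mul_l2_of_abs_le (nonneg_of_abs_sub_le_mul_abs_sub hX)
    (integrableOn_sq_interp_sub hN x) fun t ht => ?_
  obtain ⟨i, hi⟩ := exists_mem_cell hN ht
  rw [interp_of_mem_cell _ hi, interp_of_mem_cell _ hi]
  exact hX _ (hx i) t ht

end Lipschitz

section SortedStepError

variable {N : ℕ}

/-- `‖interp N (sort x) - id‖²` in `L²[0,1]` (`integral_sq_interp_sub_of_monotone`), written so
as not to depend on the order of the entries of `x`. -/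
def sortedStepSqError (x : Fin N → ℝ) : ℝ :=
  (∑ i, ∑ k, (x i ^ 2 - max (x i) (x k) + 1 / 3)) / N ^ 2

lemma integral_sq_interp_sub_of_monotone (hN : 0 < N) {w : Fin N → ℝ} (hw : Monotone w) :
    ∫ t in Icc 0 1, (interp N w t - t) ^ 2 = sortedStepSqError w := by
  have hN' : (N : ℝ) ≠ 0 := by exact_mod_cast hN.ne'
  rw [integral_sq_interp_sub hN, sum_two_mul_add_one_mul_eq_sum_sum_max hw, sortedStepSqError]
  simp only [Finset.sum_add_distrib, Finset.sum_sub_distrib, Finset.sum_const, Finset.card_univ,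
    Fintype.card_fin, nsmul_eq_mul, ← Finset.mul_sum]
  field_simp

lemma sortedStepSqError_comp_perm (x : Fin N → ℝ) (σ : Equiv.Perm (Fin N)) :
    sortedStepSqError (x ∘ σ) = sortedStepSqError x := by
  simp only [sortedStepSqError, Function.comp_apply,
    fun i => Equiv.sum_comp σ fun k => x i ^ 2 - max (x i) (x k) + 1 / 3,
    Equiv.sum_comp σ fun i => ∑ k, (x i ^ 2 - max (x i) (x k) + 1 / 3)]

lemma sortedStepSqError_nonneg (hN : 0 < N) (x : Fin N → ℝ) : 0 ≤ sortedStepSqError x := by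
  rw [← sortedStepSqError_comp_perm x (Tuple.sort x),
    ← integral_sq_interp_sub_of_monotone hN (Tuple.monotone_sort x)]
  exact setIntegral_nonneg measurableSet_Icc fun t _ => sq_nonneg _

lemma continuous_sortedStepSqError : Continuous (sortedStepSqError (N := N)) := by
  unfold sortedStepSqError; fun_prop

end SortedStepError

section Sqrt

variable {Ω : Type*} [MeasurableSpace Ω] {μ : Measure Ω} {g : Ω → ℝ}

lemma integrable_sqrt [IsFiniteMeasure μ] (hg0 : ∀ᵐ ω ∂μ, 0 ≤ g ω) (hg : Integrable g μ) :
    Integrable (fun ω => √(g ω)) μ := by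
  refine (hg.add (integrable_const 1)).mono'
    (Real.continuous_sqrt.comp_aestronglyMeasurable hg.1) ?_
  filter_upwards [hg0] with ω hω
  rw [Real.norm_eq_abs, abs_of_nonneg (Real.sqrt_nonneg _), Pi.add_apply, Real.sqrt_le_iff]
  constructor <;> nlinarith

lemma integral_sqrt_le_sqrt_integral [IsProbabilityMeasure μ] (hg0 : ∀ᵐ ω ∂μ, 0 ≤ g ω)
    (hg : Integrable g μ) : ∫ ω, √(g ω) ∂μ ≤ √(∫ ω, g ω ∂μ) :=
  Real.strictConcaveOn_sqrt.concaveOn.le_map_integral Real.continuous_sqrt.continuousOn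
    isClosed_Ici hg0 hg (integrable_sqrt hg0 hg)

end Sqrt

lemma integral_Icc_max_left {s : ℝ} (hs : s ∈ Icc (0 : ℝ) 1) :
    ∫ t in Icc 0 1, max s t = (1 + s ^ 2) / 2 := by
  have hint : ∀ a b : ℝ, IntervalIntegrable (fun t => max s t) volume a b :=
    fun _ _ => (continuous_const.max continuous_id).intervalIntegrable _ _
  rw [integral_Icc_eq_integral_Ioc, ← intervalIntegral.integral_of_le zero_le_one,
    ← intervalIntegral.integral_add_adjacent_intervals (hint 0 s) (hint s 1),
    intervalIntegral.integral_congr (g := fun _ => s) fun t ht => max_eq_left ?_,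
    intervalIntegral.integral_congr (g := fun t => t) fun t ht => max_eq_right ?_,
    intervalIntegral.integral_const, integral_id]
  · simp only [smul_eq_mul]; ring
  · rw [uIcc_of_le hs.2] at ht; exact ht.1
  · rw [uIcc_of_le hs.1] at ht; exact ht.2

lemma integral_max_prod_unif :
    ∫ p, max p.1 p.2 ∂((volume.restrict (Icc (0 : ℝ) 1)).prod (volume.restrict (Icc (0 : ℝ) 1)))
      = 2 / 3 := by
  have hint : Integrable (fun p : ℝ × ℝ => max p.1 p.2)
      ((volume.restrict (Icc (0 : ℝ) 1)).prod (volume.restrict (Icc (0 : ℝ) 1))) := by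
    rw [Measure.prod_restrict, ← Measure.volume_eq_prod]
    exact (continuous_fst.max continuous_snd).continuousOn.integrableOn_compact
      (isCompact_Icc.prod isCompact_Icc)
  rw [integral_prod _ hint, setIntegral_congr_fun measurableSet_Icc fun s hs =>
    integral_Icc_max_left hs, integral_Icc_eq_integral_Ioc,
    ← intervalIntegral.integral_of_le zero_le_one, intervalIntegral.integral_div,
    intervalIntegral.integral_add intervalIntegrable_const
      ((continuous_pow 2).intervalIntegrable _ _), integral_pow]
  norm_num

namespace IIDUniform

variable {Ω : Type*} [MeasurableSpace Ω] {μ : Measure Ω} {N : ℕ} {v : Fin N → Ω → ℝ}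
  (hv : IIDUniform v μ)
include hv

lemma ae_mem_Icc : ∀ᵐ ω ∂μ, ∀ j, v j ω ∈ Icc (0 : ℝ) 1 := by
  refine ae_all_iff.2 fun j => ae_of_ae_map (hv.1 j).aemeasurable ?_
  rw [hv.2.2 j]
  exact ae_restrict_mem measurableSet_Icc

lemma integrable_comp [IsFiniteMeasure μ] {F : (Fin N → ℝ) → ℝ} (hF : Continuous F) :
    Integrable (fun ω => F fun j => v j ω) μ := by
  obtain ⟨C, hC⟩ := (isCompact_univ_pi fun (_ : Fin N) => isCompact_Icc (a := (0 : ℝ)) (b := 1)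
    ).exists_bound_of_continuousOn hF.continuousOn
  refine Integrable.of_bound (hF.measurable.comp (measurable_pi_lambda _ hv.1)).aestronglyMeasurable
    C ?_
  filter_upwards [hv.ae_mem_Icc] with ω hω
  exact hC _ fun j _ => hω j

lemma integral_comp (j : Fin N) {f : ℝ → ℝ} (hf : Measurable f) :
    ∫ ω, f (v j ω) ∂μ = ∫ t in Icc 0 1, f t := by
  rw [← hv.2.2 j, integral_map (hv.1 j).aemeasurable hf.aestronglyMeasurable]

lemma integral_eq_one_div_two (j : Fin N) : ∫ ω, v j ω ∂μ = 1 / 2 := by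
  rw [hv.integral_comp j (f := fun t => t) measurable_id, integral_Icc_eq_integral_Ioc,
    ← intervalIntegral.integral_of_le zero_le_one, integral_id]
  norm_num

lemma integral_sq_eq_one_div_three (j : Fin N) : ∫ ω, v j ω ^ 2 ∂μ = 1 / 3 := by
  rw [hv.integral_comp j (f := fun t => t ^ 2) (by fun_prop), integral_Icc_eq_integral_Ioc,
    ← intervalIntegral.integral_of_le zero_le_one, integral_pow]
  norm_num

lemma integral_max [IsFiniteMeasure μ] {j k : Fin N} (hjk : j ≠ k) :
    ∫ ω, max (v j ω) (v k ω) ∂μ = 2 / 3 := by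
  have hmap : μ.map (fun ω => (v j ω, v k ω))
      = (volume.restrict (Icc (0 : ℝ) 1)).prod (volume.restrict (Icc (0 : ℝ) 1)) := by
    rw [(indepFun_iff_map_prod_eq_prod_map_map (hv.1 j).aemeasurable (hv.1 k).aemeasurable).1
      (hv.2.1.indepFun hjk), hv.2.2 j, hv.2.2 k]
  rw [← integral_max_prod_unif, ← hmap, integral_map ((hv.1 j).prodMk (hv.1 k)).aemeasurable
    (continuous_fst.max continuous_snd).aestronglyMeasurable]

lemma integral_sortedStepSqError [IsProbabilityMeasure μ] :
    ∫ ω, sortedStepSqError (fun j => v j ω) ∂μ = 1 / (6 * N) := by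
  have hterm : ∀ i k, ∫ ω, (v i ω ^ 2 - max (v i ω) (v k ω) + 1 / 3) ∂μ
      = if i = k then 1 / 6 else 0 := fun i k => by
    have hsq : Integrable (fun ω => v i ω ^ 2) μ :=
      hv.integrable_comp (F := fun x => x i ^ 2) (by fun_prop)
    have hmax : Integrable (fun ω => max (v i ω) (v k ω)) μ :=
      hv.integrable_comp (F := fun x => max (x i) (x k)) (by fun_prop)
    have hdiff : Integrable (fun ω => v i ω ^ 2 - max (v i ω) (v k ω)) μ := hsq.sub hmax
    rw [integral_add hdiff (integrable_const _), integral_sub hsq hmax,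
      hv.integral_sq_eq_one_div_three, integral_const, probReal_univ, one_smul]
    split_ifs with hik
    · subst hik
      simp only [max_self, hv.integral_eq_one_div_two]
      norm_num
    · rw [hv.integral_max hik]
      norm_num
  have hint : ∀ i k, Integrable (fun ω => v i ω ^ 2 - max (v i ω) (v k ω) + 1 / 3) μ :=
    fun i k => hv.integrable_comp (F := fun x => x i ^ 2 - max (x i) (x k) + 1 / 3) (by fun_prop)
  simp only [sortedStepSqError]
  rw [integral_div,
    integral_finsetSum _ fun i _ => integrable_finsetSum _ fun k _ => hint i k,
    Finset.sum_congr rfl fun i _ => integral_finsetSum _ fun k _ => hint i k]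
  simp only [hterm, Finset.sum_ite_eq,
    Finset.mem_univ, if_true, Finset.sum_const, Finset.card_univ, Fintype.card_fin, nsmul_eq_mul]
  field_simp

end IIDUniform

/-- expected L² error of the step interpolation at order statistics of
i.i.d. uniforms: `E‖X̄_N − X‖ ≤ A_s/√(6N)`. -/
theorem expected_signal_sampling_error {Ω : Type*} [MeasurableSpace Ω]
    (μ : Measure Ω) [IsProbabilityMeasure μ]
    (As : ℝ) (X : ℝ → ℝ)
    (hX : ∀ a ∈ Set.Icc (0 : ℝ) 1, ∀ b ∈ Set.Icc (0 : ℝ) 1, |X a - X b| ≤ As * |a - b|)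
    (N : ℕ) (hN : 0 < N)
    (v : Fin N → Ω → ℝ) (hiid : IIDUniform v μ)
    (u : Ω → Fin N → ℝ) (hord : SortedVersion u v) :
    (∫ ω, l2 (fun t => interp N (fun i => X (u ω i)) t - X t) ∂μ)
      ≤ As / Real.sqrt (6 * N) := by
  set G : Ω → ℝ := fun ω => sortedStepSqError fun j => v j ω
  have hG0 : ∀ᵐ ω ∂μ, 0 ≤ G ω := ae_of_all _ fun _ => sortedStepSqError_nonneg hN _
  have hG : Integrable G μ := hiid.integrable_comp continuous_sortedStepSqError
  have hbound : ∀ᵐ ω ∂μ, l2 (fun t => interp N (fun i => X (u ω i)) t - X t) ≤ As * √(G ω) := by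
    filter_upwards [hiid.ae_mem_Icc] with ω hω
    obtain ⟨hmono, σ, hσ⟩ := hord ω
    have hu : u ω = (fun j => v j ω) ∘ σ := funext hσ
    calc l2 (fun t => interp N (fun i => X (u ω i)) t - X t)
        ≤ As * l2 (fun t => interp N (u ω) t - t) :=
          l2_interp_comp_sub_le hX hN fun i => hσ i ▸ hω (σ i)
      _ = As * √(G ω) := by
          rw [l2, integral_sq_interp_sub_of_monotone hN hmono, hu, sortedStepSqError_comp_perm]
  calc (∫ ω, l2 (fun t => interp N (fun i => X (u ω i)) t - X t) ∂μ)
      ≤ ∫ ω, As * √(G ω) ∂μ := integral_mono_of_nonneg (ae_of_all _ fun _ => Real.sqrt_nonneg _)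
        ((integrable_sqrt hG0 hG).const_mul As) hbound
    _ = As * ∫ ω, √(G ω) ∂μ := integral_const_mul As _
    _ ≤ As * √(∫ ω, G ω ∂μ) := mul_le_mul_of_nonneg_left
        (integral_sqrt_le_sqrt_integral hG0 hG) (nonneg_of_abs_sub_le_mul_abs_sub hX)
    _ = As / √(6 * N) := by
        rw [hiid.integral_sortedStepSqError, one_div, Real.sqrt_inv, div_eq_mul_inv]

end
end

section
/- Let {φ̄_i}_{i∈ℤ∖{0}} and {φ_i}_{i∈ℤ∖{0}} be two orthonormal families in L²[0,1], and let X ∈ L²[0,1] satisfy X = Σ_i ⟨X, φ̄_i⟩ φ̄_i = Σ_i ⟨X, φ_i⟩ φ_i. Let (c_i)_{i∈ℤ∖{0}} be a bounded family of real numbers and suppose there exists k ∈ ℝ with |c_i − k| ≤ Δ for all i. Then ‖Σ_i c_i·(⟨X, φ̄_i⟩ φ̄_i − ⟨X, φ_i⟩ φ_i)‖_{L²[0,1]} ≤ 2Δ·‖X‖_{L²[0,1]}. -/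
/-! Both families are orthonormal in L², and Bessel's inequality together with the pointwise
expansions forces each expansion of `X` to converge to `X` in L². Writing `cᵢ = (cᵢ - k) + k`, the
`k`-parts of the two expansions cancel, and each remaining series has L² norm at most `Δ‖X‖`, again
by Bessel. An L²-convergent series converges a.e. along a sequence of partial sums, so wherever the
pointwise series converges it agrees with its L² sum, and elsewhere `tsum` returns `0`; either way
its square is dominated by that of the L² sum. -/

open MeasureTheory Set ProbabilityTheory

noncomputable section

open Filter Topology
open scoped InnerProductSpace

section Hilbert

variable {𝕜 E ι : Type*} [RCLike 𝕜] [NormedAddCommGroup E] [InnerProductSpace 𝕜 E]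
  {v : ι → E}

theorem Orthonormal.norm_sum_mul_inner_smul_le (hv : Orthonormal 𝕜 v) {d : ι → 𝕜} {Δ : ℝ}
    (hΔ : 0 ≤ Δ) (hd : ∀ i, ‖d i‖ ≤ Δ) (x : E) (s : Finset ι) :
    ‖∑ i ∈ s, (d i * ⟪v i, x⟫_𝕜) • v i‖ ≤ Δ * ‖x‖ := by
  have hsq : ‖∑ i ∈ s, (d i * ⟪v i, x⟫_𝕜) • v i‖ ^ 2 ≤ (Δ * ‖x‖) ^ 2 :=
    calc ‖∑ i ∈ s, (d i * ⟪v i, x⟫_𝕜) • v i‖ ^ 2 = ∑ i ∈ s, ‖d i‖ ^ 2 * ‖⟪v i, x⟫_𝕜‖ ^ 2 := by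
          simpa [mul_pow] using hv.orthogonalFamily.norm_sum (fun i => d i * ⟪v i, x⟫_𝕜) s
      _ ≤ ∑ i ∈ s, Δ ^ 2 * ‖⟪v i, x⟫_𝕜‖ ^ 2 := by
          gcongr with i; exact hd i
      _ ≤ (Δ * ‖x‖) ^ 2 := by
          rw [← Finset.mul_sum, mul_pow]
          exact mul_le_mul_of_nonneg_left (hv.sum_inner_products_le x) (sq_nonneg Δ)
  exact (sq_le_sq₀ (norm_nonneg _) (by positivity)).1 hsq

theorem Orthonormal.exists_hasSum_mul_inner_smul [CompleteSpace E] (hv : Orthonormal 𝕜 v)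
    {d : ι → 𝕜} {Δ : ℝ} (hΔ : 0 ≤ Δ) (hd : ∀ i, ‖d i‖ ≤ Δ) (x : E) :
    ∃ y, HasSum (fun i => (d i * ⟪v i, x⟫_𝕜) • v i) y ∧ ‖y‖ ≤ Δ * ‖x‖ := by
  have hsummable : Summable fun i => (d i * ⟪v i, x⟫_𝕜) • v i := by
    have := (hv.orthogonalFamily.summable_iff_norm_sq_summable fun i => d i * ⟪v i, x⟫_𝕜).2 <|
      ((hv.inner_products_summable x).mul_left (Δ ^ 2)).of_nonneg_of_le (fun i => by positivity)
        fun i => by rw [norm_mul, mul_pow]; gcongr; exact hd i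
    simpa using this
  exact ⟨_, hsummable.hasSum, le_of_tendsto' hsummable.hasSum.norm
    (hv.norm_sum_mul_inner_smul_le hΔ hd x)⟩

theorem exists_hasSum_smul_sub_expansions [CompleteSpace E] {v w : ι → E}
    (hv : Orthonormal 𝕜 v) (hw : Orthonormal 𝕜 w) {x : E}
    (hvx : HasSum (fun i => ⟪v i, x⟫_𝕜 • v i) x) (hwx : HasSum (fun i => ⟪w i, x⟫_𝕜 • w i) x)
    {c : ι → 𝕜} {k : 𝕜} {Δ : ℝ} (hΔ : 0 ≤ Δ) (hc : ∀ i, ‖c i - k‖ ≤ Δ) :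
    ∃ z, HasSum (fun i => c i • (⟪v i, x⟫_𝕜 • v i - ⟪w i, x⟫_𝕜 • w i)) z ∧
      ‖z‖ ≤ 2 * Δ * ‖x‖ := by
  obtain ⟨U, hU, hUx⟩ := hv.exists_hasSum_mul_inner_smul hΔ hc x
  obtain ⟨V, hV, hVx⟩ := hw.exists_hasSum_mul_inner_smul hΔ hc x
  -- `c = (c - k) + k`, and the `k`-parts of the two expansions both sum to `k • x`
  have hsum := (hU.sub hV).add ((hvx.sub hwx).const_smul k)
  rw [sub_self, smul_zero, add_zero] at hsum
  refine ⟨U - V, hsum.congr_fun fun i => ?_, ?_⟩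
  · simp only [smul_sub, mul_smul, sub_smul]; abel
  · calc ‖U - V‖ ≤ ‖U‖ + ‖V‖ := norm_sub_le U V
      _ ≤ 2 * Δ * ‖x‖ := by linarith

theorem eq_of_real_inner_eq_norm_sq_of_norm_le {F : Type*} [NormedAddCommGroup F]
    [InnerProductSpace ℝ F] {x y : F} (hxy : ⟪x, y⟫_ℝ = ‖x‖ ^ 2) (hy : ‖y‖ ≤ ‖x‖) : y = x := by
  have : ‖x - y‖ ^ 2 ≤ 0 := by
    rw [norm_sub_sq_real, hxy]
    nlinarith [norm_nonneg y]
  simpa [sub_eq_zero, eq_comm] using this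

end Hilbert

namespace MeasureTheory

variable {α ι : Type*} [MeasurableSpace α] {μ : Measure α}

theorem Lp.ae_tsum_eq_or_eq_zero_of_hasSum [Countable ι] {E : Type*} [NormedAddCommGroup E]
    {p : ENNReal} [Fact (1 ≤ p)] {f : ι → α → E} {w : ι → Lp E p μ} {z : Lp E p μ}
    (hwf : ∀ i, w i =ᵐ[μ] f i) (h : HasSum w z) :
    ∀ᵐ a ∂μ, ∑' i, f i a = z a ∨ ∑' i, f i a = 0 := by
  obtain ⟨s, hs, hsz⟩ := (tendstoInMeasure_of_tendsto_Lp h).exists_seq_tendsto_ae'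
  have hpartial : ∀ᵐ a ∂μ, ∀ n, (∑ i ∈ s n, w i : Lp E p μ) a = ∑ i ∈ s n, f i a := by
    rw [ae_all_iff]
    intro n
    filter_upwards [Lp.coeFn_fun_finsetSum (s n) w, ae_all_iff.2 hwf] with a ha hwfa
    simp only [ha, hwfa]
  filter_upwards [hsz, hpartial] with a hza hpa
  by_cases hf : Summable fun i => f i a
  · refine Or.inl (tendsto_nhds_unique (hf.hasSum.comp hs) ?_)
    simpa only [Function.comp_def, hpa] using hza
  · exact Or.inr (tsum_eq_zero_of_not_summable hf)

theorem L2.real_inner_eq_integral (f g : Lp ℝ 2 μ) : ⟪f, g⟫_ℝ = ∫ a, f a * g a ∂μ := by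
  simp only [L2.inner_def, RCLike.inner_apply, conj_trivial, mul_comm]

theorem L2.norm_eq_sqrt_integral_sq (f : Lp ℝ 2 μ) : ‖f‖ = √(∫ a, f a ^ 2 ∂μ) := by
  rw [← Real.sqrt_sq (norm_nonneg f), ← real_inner_self_eq_norm_sq, L2.real_inner_eq_integral]
  simp only [sq]

theorem MemLp.real_inner_toLp {f g : α → ℝ} (hf : MemLp f 2 μ) (hg : MemLp g 2 μ) :
    ⟪hf.toLp f, hg.toLp g⟫_ℝ = ∫ a, f a * g a ∂μ := by
  rw [L2.real_inner_eq_integral]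
  refine integral_congr_ae ?_
  filter_upwards [hf.coeFn_toLp, hg.coeFn_toLp] with a hfa hga
  rw [hfa, hga]

theorem MemLp.norm_toLp_eq_sqrt_integral_sq {f : α → ℝ} (hf : MemLp f 2 μ) :
    ‖hf.toLp f‖ = √(∫ a, f a ^ 2 ∂μ) := by
  rw [← Real.sqrt_sq (norm_nonneg _), ← real_inner_self_eq_norm_sq, hf.real_inner_toLp]
  simp only [sq]

theorem orthonormal_toLp [DecidableEq ι] {φ : ι → α → ℝ} (hφ : ∀ i, MemLp (φ i) 2 μ)
    (h : ∀ i j, ∫ a, φ i a * φ j a ∂μ = if i = j then 1 else 0) :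
    Orthonormal ℝ fun i => (hφ i).toLp (φ i) := by
  rw [orthonormal_iff_ite]
  intro i j
  rw [MemLp.real_inner_toLp, h]

theorem sqrt_integral_sq_tsum_le_norm [Countable ι] {f : ι → α → ℝ} {w : ι → Lp ℝ 2 μ}
    {z : Lp ℝ 2 μ} (hwf : ∀ i, w i =ᵐ[μ] f i) (h : HasSum w z) :
    √(∫ a, (∑' i, f i a) ^ 2 ∂μ) ≤ ‖z‖ := by
  rw [L2.norm_eq_sqrt_integral_sq]
  refine Real.sqrt_le_sqrt (integral_mono_of_nonneg (ae_of_all _ fun a => sq_nonneg _)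
    (Lp.memLp z).integrable_sq ?_)
  filter_upwards [Lp.ae_tsum_eq_or_eq_zero_of_hasSum hwf h] with a ha
  rcases ha with ha | ha <;> simp [ha, sq_nonneg]

theorem _root_.Orthonormal.hasSum_of_ae_eq_tsum [Countable ι] {φ : ι → α → ℝ}
    {v : ι → Lp ℝ 2 μ} (hv : Orthonormal ℝ v) (hvφ : ∀ i, v i =ᵐ[μ] φ i) (x : Lp ℝ 2 μ)
    (hx : ∀ᵐ a ∂μ, x a = ∑' i, ⟪v i, x⟫_ℝ * φ i a) :
    HasSum (fun i => ⟪v i, x⟫_ℝ • v i) x := by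
  obtain ⟨y, hy, hyx⟩ := hv.exists_hasSum_mul_inner_smul zero_le_one (d := fun _ => 1)
    (fun _ => norm_one.le) x
  simp only [one_mul] at hy hyx
  have hterm : ∀ i, ⟪v i, x⟫_ℝ • v i =ᵐ[μ] fun a => ⟪v i, x⟫_ℝ * φ i a := fun i => by
    filter_upwards [Lp.coeFn_smul (⟪v i, x⟫_ℝ) (v i), hvφ i] with a h1 h2
    rw [h1, Pi.smul_apply, h2, smul_eq_mul]
  -- where the pointwise series diverges, `x` vanishes by convention, so `x * y = x * x` a.e.
  have hxy : ⟪x, y⟫_ℝ = ‖x‖ ^ 2 := by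
    rw [← real_inner_self_eq_norm_sq, L2.real_inner_eq_integral, L2.real_inner_eq_integral]
    refine integral_congr_ae ?_
    filter_upwards [hx, Lp.ae_tsum_eq_or_eq_zero_of_hasSum hterm hy] with a hxa ha
    rcases ha with ha | ha <;> rw [← hxa] at ha <;> simp [ha]
  rwa [eq_of_real_inner_eq_norm_sq_of_norm_le hxy (by simpa using hyx)] at hy

theorem sqrt_integral_sq_tsum_sub_expansions_le [Countable ι] [DecidableEq ι]
    {φ ψ : ι → α → ℝ} (hφ : ∀ i, MemLp (φ i) 2 μ) (hψ : ∀ i, MemLp (ψ i) 2 μ)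
    (hφON : ∀ i j, ∫ a, φ i a * φ j a ∂μ = if i = j then 1 else 0)
    (hψON : ∀ i j, ∫ a, ψ i a * ψ j a ∂μ = if i = j then 1 else 0)
    {X : α → ℝ} (hX : MemLp X 2 μ)
    (hexpφ : ∀ᵐ a ∂μ, X a = ∑' i, (∫ t, X t * φ i t ∂μ) * φ i a)
    (hexpψ : ∀ᵐ a ∂μ, X a = ∑' i, (∫ t, X t * ψ i t ∂μ) * ψ i a)
    {c : ι → ℝ} {k Δ : ℝ} (hΔ : 0 ≤ Δ) (hc : ∀ i, |c i - k| ≤ Δ) :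
    √(∫ a, (∑' i, c i * ((∫ t, X t * φ i t ∂μ) * φ i a - (∫ t, X t * ψ i t ∂μ) * ψ i a)) ^ 2 ∂μ)
      ≤ 2 * Δ * √(∫ a, X a ^ 2 ∂μ) := by
  have hcoeff {χ : ι → α → ℝ} (hχ : ∀ i, MemLp (χ i) 2 μ) (i : ι) :
      ⟪(hχ i).toLp (χ i), hX.toLp X⟫_ℝ = ∫ t, X t * χ i t ∂μ := by
    simp only [MemLp.real_inner_toLp, mul_comm]
  have hexp {χ : ι → α → ℝ} (hχ : ∀ i, MemLp (χ i) 2 μ)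
      (hχON : ∀ i j, ∫ a, χ i a * χ j a ∂μ = if i = j then 1 else 0)
      (hexpχ : ∀ᵐ a ∂μ, X a = ∑' i, (∫ t, X t * χ i t ∂μ) * χ i a) :
      HasSum (fun i => ⟪(hχ i).toLp (χ i), hX.toLp X⟫_ℝ • (hχ i).toLp (χ i)) (hX.toLp X) :=
    (orthonormal_toLp hχ hχON).hasSum_of_ae_eq_tsum (fun i => (hχ i).coeFn_toLp) _ <| by
      filter_upwards [hX.coeFn_toLp, hexpχ] with a hXa ha
      simpa only [hXa, hcoeff] using ha
  obtain ⟨z, hz, hzX⟩ := exists_hasSum_smul_sub_expansions (orthonormal_toLp hφ hφON)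
    (orthonormal_toLp hψ hψON) (hexp hφ hφON hexpφ) (hexp hψ hψON hexpψ) hΔ hc
  rw [← hX.norm_toLp_eq_sqrt_integral_sq]
  refine (sqrt_integral_sq_tsum_le_norm (fun i => ?_) hz).trans hzX
  simp only [hcoeff, ← MemLp.toLp_const_smul, ← MemLp.toLp_sub]
  exact MemLp.coeFn_toLp _

end MeasureTheory

theorem two_basis_expansion_difference_bound_general (φb φ : ℤ → ℝ → ℝ)
    (hmemb : ∀ i : ℤ, i ≠ 0 → MemLp (φb i) 2 (volume.restrict (Set.Icc (0 : ℝ) 1)))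
    (hmem : ∀ i : ℤ, i ≠ 0 → MemLp (φ i) 2 (volume.restrict (Set.Icc (0 : ℝ) 1)))
    (hONb : ∀ i j : ℤ, i ≠ 0 → j ≠ 0 →
      (∫ t in Set.Icc (0 : ℝ) 1, φb i t * φb j t) = if i = j then 1 else 0)
    (hON : ∀ i j : ℤ, i ≠ 0 → j ≠ 0 →
      (∫ t in Set.Icc (0 : ℝ) 1, φ i t * φ j t) = if i = j then 1 else 0)
    (X : ℝ → ℝ) (hX : MemLp X 2 (volume.restrict (Set.Icc (0 : ℝ) 1)))
    (hexpb : ∀ᵐ u ∂(volume.restrict (Set.Icc (0 : ℝ) 1)),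
      X u = ∑' i : {i : ℤ // i ≠ 0}, (∫ t in Set.Icc (0 : ℝ) 1, X t * φb i t) * φb i u)
    (hexp : ∀ᵐ u ∂(volume.restrict (Set.Icc (0 : ℝ) 1)),
      X u = ∑' i : {i : ℤ // i ≠ 0}, (∫ t in Set.Icc (0 : ℝ) 1, X t * φ i t) * φ i u)
    (c : ℤ → ℝ)
    (k Δ : ℝ) (hk : ∀ i : ℤ, i ≠ 0 → |c i - k| ≤ Δ) :
    l2 (fun u => ∑' i : {i : ℤ // i ≠ 0},
        c i * ((∫ t in Set.Icc (0 : ℝ) 1, X t * φb i t) * φb i u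
          - (∫ t in Set.Icc (0 : ℝ) 1, X t * φ i t) * φ i u))
      ≤ 2 * Δ * l2 X :=
  sqrt_integral_sq_tsum_sub_expansions_le (fun i : {i : ℤ // i ≠ 0} => hmemb i i.2)
    (fun i => hmem i i.2) (fun i j => by simpa [Subtype.ext_iff] using hONb i j i.2 j.2)
    (fun i j => by simpa [Subtype.ext_iff] using hON i j i.2 j.2) hX hexpb hexp
    ((abs_nonneg _).trans (hk 1 one_ne_zero)) fun i => hk i i.2

/-- for two orthonormal families both expanding `X`, and coefficients `cᵢ`
within `Δ` of a constant `k`, `‖Σᵢ cᵢ·(⟨X, φ̄ᵢ⟩φ̄ᵢ − ⟨X, φᵢ⟩φᵢ)‖ ≤ 2Δ·‖X‖`. -/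
theorem two_basis_expansion_difference_bound (φb φ : ℤ → ℝ → ℝ)
    (hmemb : ∀ i : ℤ, i ≠ 0 → MemLp (φb i) 2 (volume.restrict (Set.Icc (0 : ℝ) 1)))
    (hmem : ∀ i : ℤ, i ≠ 0 → MemLp (φ i) 2 (volume.restrict (Set.Icc (0 : ℝ) 1)))
    (hONb : ∀ i j : ℤ, i ≠ 0 → j ≠ 0 →
      (∫ t in Set.Icc (0 : ℝ) 1, φb i t * φb j t) = if i = j then 1 else 0)
    (hON : ∀ i j : ℤ, i ≠ 0 → j ≠ 0 →
      (∫ t in Set.Icc (0 : ℝ) 1, φ i t * φ j t) = if i = j then 1 else 0)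
    (X : ℝ → ℝ) (hX : MemLp X 2 (volume.restrict (Set.Icc (0 : ℝ) 1)))
    (hexpb : ∀ᵐ u ∂(volume.restrict (Set.Icc (0 : ℝ) 1)),
      X u = ∑' i : {i : ℤ // i ≠ 0}, (∫ t in Set.Icc (0 : ℝ) 1, X t * φb i t) * φb i u)
    (hexp : ∀ᵐ u ∂(volume.restrict (Set.Icc (0 : ℝ) 1)),
      X u = ∑' i : {i : ℤ // i ≠ 0}, (∫ t in Set.Icc (0 : ℝ) 1, X t * φ i t) * φ i u)
    (c : ℤ → ℝ) (hbdd : ∃ C : ℝ, ∀ i : ℤ, i ≠ 0 → |c i| ≤ C)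
    (k Δ : ℝ) (hk : ∀ i : ℤ, i ≠ 0 → |c i - k| ≤ Δ) :
    l2 (fun u => ∑' i : {i : ℤ // i ≠ 0},
        c i * ((∫ t in Set.Icc (0 : ℝ) 1, X t * φb i t) * φb i u
          - (∫ t in Set.Icc (0 : ℝ) 1, X t * φ i t) * φ i u))
      ≤ 2 * Δ * l2 X :=
  two_basis_expansion_difference_bound_general φb φ hmemb hmem hONb hON X hX hexpb hexp c k Δ hk

end
end
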